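/- arXiv:2202.05717 — 4 statements merged into one kernel-verified Lean document; each statement's English description precedes it below -/
import Mathlib

section
/- For 2×2 trace-zero matrices A and B over ℂ, det(AB - BA) = 4·det(A)·det(B) - Tr(AB)². -/
namespace Matrix

theorem det_commutator_fin_two {R : Type*} [CommRing R] (A B : Matrix (Fin 2) (Fin 2) R) :
    (A * B - B * A).det = 4 * A.det * B.det - (A * B).trace ^ 2
      - A.trace ^ 2 * B.det - B.trace ^ 2 * A.det + A.trace * B.trace * (A * B).trace := by
  simp only [trace_fin_two, det_fin_two, sub_apply, mul_apply, Fin.sum_univ_two]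
  ring

end Matrix

theorem stmt_1 (A B : Matrix (Fin 2) (Fin 2) ℂ) (hA : A.trace = 0) (hB : B.trace = 0) :
    (A * B - B * A).det = 4 * A.det * B.det - ((A * B).trace) ^ 2 := by
  rw [Matrix.det_commutator_fin_two, hA, hB]
  ring
end

section
/- Let G be a group acting on a polynomial ring k[V] by degree-preserving algebra automorphisms, where k is an infinite field. If f₁, f₂ ∈ k[V] are coprime and the rational function f₁/f₂ is G-invariant, then for each g ∈ G there is a scalar λ_g ∈ k with g·f₁ = λ_g f₁ and g·f₂ = λ_g f₂, and g ↦ λ_g is a group homomorphism G → k*. -/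
/-! Coprimality turns `g • f₁ * f₂ = f₁ * g • f₂` into `f₂ ∣ g • f₂`; the same for `g⁻¹` makes `f₂`
and `g • f₂` associates, and the units of `k[V]` are the nonzero constants. The constant is unique
since `f₂ ≠ 0`, which makes `g ↦ λ_g` multiplicative. -/

open MvPolynomial

theorem associated_map_of_forall_dvd_map {R A G : Type*} [CommSemiring R] [CommRing A] [IsDomain A]
    [Algebra R A] [Group G] (φ : G →* (A ≃ₐ[R] A)) {b : A} (hdvd : ∀ g, b ∣ φ g b) (g : G) :
    Associated b (φ g b) := by
  refine associated_of_dvd_dvd (hdvd g) ?_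
  obtain ⟨e, he⟩ := hdvd g⁻¹
  refine ⟨φ g e, ?_⟩
  have hgg : φ g (φ g⁻¹ b) = b := by
    rw [← AlgEquiv.mul_apply, ← map_mul, mul_inv_cancel, map_one, AlgEquiv.one_apply]
  rw [he, map_mul] at hgg
  exact hgg.symm

theorem MvPolynomial.exists_units_eq_smul_of_associated {σ R : Type*} [CommRing R] [IsReduced R]
    {p q : MvPolynomial σ R} (h : Associated p q) : ∃ c : Rˣ, q = (c : R) • p := by
  obtain ⟨u, rfl⟩ := h
  obtain ⟨r, hr, hu⟩ := (isUnit_iff_eq_C_of_isReduced).1 u.isUnit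
  exact ⟨hr.unit, by rw [hu, smul_eq_C_mul, mul_comm, IsUnit.unit_spec]⟩

theorem exists_monoidHom_map_eq_smul {R A G : Type*} [CommRing R] [IsDomain R] [Ring A]
    [Algebra R A] [NoZeroSMulDivisors R A] [Monoid G] (φ : G →* (A ≃ₐ[R] A)) {f : A} (hf : f ≠ 0)
    (h : ∀ g, ∃ c : Rˣ, φ g f = (c : R) • f) :
    ∃ χ : G →* Rˣ, ∀ g, φ g f = (χ g : R) • f := by
  choose χ hχ using h
  have huniq : ∀ g (c : Rˣ), φ g f = (c : R) • f → c = χ g := fun g c hc =>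
    Units.ext (smul_left_injective R hf (hc.symm.trans (hχ g)))
  refine ⟨{ toFun := χ, map_one' := ?_, map_mul' := ?_ }, hχ⟩
  · exact (huniq 1 1 (by simp)).symm
  · intro g h
    refine (huniq (g * h) (χ g * χ h) ?_).symm
    rw [map_mul, AlgEquiv.mul_apply, hχ h, map_smul, hχ g, Units.val_mul, mul_smul, smul_comm]

theorem stmt_8_general {k : Type*} [Field k] {V : Type*} {G : Type*} [Group G]
    (φ : G →* (MvPolynomial V k ≃ₐ[k] MvPolynomial V k))
    (f₁ f₂ : MvPolynomial V k) (hf₂ : f₂ ≠ 0)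
    (hcop : IsRelPrime f₁ f₂)
    (hinv : ∀ g : G, φ g f₁ * f₂ = f₁ * φ g f₂) :
    ∃ lam : G →* kˣ, ∀ g : G, φ g f₁ = (lam g : k) • f₁ ∧ φ g f₂ = (lam g : k) • f₂ := by
  have hdvd : ∀ g, f₂ ∣ φ g f₂ := fun g =>
    hcop.symm.dvd_of_dvd_mul_left ⟨φ g f₁, by rw [← hinv g, mul_comm]⟩
  obtain ⟨lam, hlam⟩ := exists_monoidHom_map_eq_smul φ hf₂ fun g =>
    exists_units_eq_smul_of_associated (associated_map_of_forall_dvd_map φ hdvd g)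
  refine ⟨lam, fun g => ⟨mul_right_cancel₀ hf₂ ?_, hlam g⟩⟩
  rw [hinv g, hlam g, mul_smul_comm, smul_mul_assoc]

theorem stmt_8 {k : Type*} [Field k] [Infinite k] {V : Type*} {G : Type*} [Group G]
    (φ : G →* (MvPolynomial V k ≃ₐ[k] MvPolynomial V k))
    (hdeg : ∀ (g : G) (p : MvPolynomial V k), (φ g p).totalDegree = p.totalDegree)
    (f₁ f₂ : MvPolynomial V k) (hf₂ : f₂ ≠ 0)
    (hcop : IsRelPrime f₁ f₂)
    (hinv : ∀ g : G, φ g f₁ * f₂ = f₁ * φ g f₂) :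
    ∃ lam : G →* kˣ, ∀ g : G, φ g f₁ = (lam g : k) • f₁ ∧ φ g f₂ = (lam g : k) • f₂ :=
  stmt_8_general φ f₁ f₂ hf₂ hcop hinv
end

section
/- If a group G acting on k[V] by algebra automorphisms admits no nontrivial group homomorphism G → k*, then the field of G-invariant rational functions k(V)^G equals the fraction field of the invariant ring k[V]^G. -/
/-!
Write an invariant rational function `x` as a reduced fraction `a / b`; since `k[V]` is a UFD this
is unique up to a unit, and the units of `k[V]` are the nonzero constants. Hence every `g ∈ G`
sends `b` to `χ(g) b` for a scalar `χ(g) ∈ kˣ`, and `χ` is a character of `G`. As `G` has no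
nontrivial character, `b` is invariant, and then so is `a = x b`.
-/

open MvPolynomial IsFractionRing

namespace IsFractionRing

variable {A K : Type*} [CommRing A] [IsDomain A] [UniqueFactorizationMonoid A]
  [Field K] [Algebra A K] [IsFractionRing A K]

theorem den_dvd_of_div_eq {x : K} {a b : A} (hb : b ≠ 0)
    (hx : algebraMap A K a / algebraMap A K b = x) : (den A x : A) ∣ b := by
  have hcross : num A x * b = a * den A x := by
    apply IsFractionRing.injective A K
    rw [map_mul, map_mul, ← div_eq_div_iff (by simp) (by simpa using hb), mk'_num_den', hx]
  exact (num_den_reduced A x).symm.dvd_of_dvd_mul_left ⟨a, by rw [hcross, mul_comm]⟩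

theorem den_dvd_map_den {σ : A →+* A} (hσ : Function.Injective σ) {τ : K →+* K}
    (hτ : ∀ a, τ (algebraMap A K a) = algebraMap A K (σ a)) {x : K} (hx : τ x = x) :
    (den A x : A) ∣ σ (den A x) := by
  have hden : σ (den A x) ≠ 0 :=
    (map_ne_zero_iff σ hσ).mpr (nonZeroDivisors.ne_zero (den A x).2)
  refine den_dvd_of_div_eq (a := σ (num A x)) hden ?_
  rw [← hτ, ← hτ, ← map_div₀, mk'_num_den', hx]

theorem associated_map_den (σ : A ≃+* A) (τ : K ≃+* K)
    (hτ : ∀ a, τ (algebraMap A K a) = algebraMap A K (σ a)) {x : K} (hx : τ x = x) :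
    Associated (den A x : A) (σ (den A x)) := by
  have hτ_symm (a : A) : τ.symm (algebraMap A K a) = algebraMap A K (σ.symm a) := by
    rw [τ.symm_apply_eq, hτ, σ.apply_symm_apply]
  have hdvd := den_dvd_map_den (σ := (σ : A →+* A)) (τ := (τ : K →+* K)) σ.injective hτ hx
  have hdvd_symm := den_dvd_map_den (σ := (σ.symm : A →+* A)) (τ := (τ.symm : K →+* K))
    σ.symm.injective hτ_symm (τ.symm_apply_eq.mpr hx.symm)
  exact associated_of_dvd_dvd hdvd (by simpa using map_dvd σ hdvd_symm)

end IsFractionRing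

theorem MvPolynomial.exists_smul_eq_of_associated {R σ : Type*} [CommRing R] [IsReduced R]
    {p q : MvPolynomial σ R} (h : Associated p q) : ∃ c : Rˣ, q = (c : R) • p := by
  obtain ⟨u, rfl⟩ := h
  obtain ⟨c, hc, hu⟩ :=
    (isUnit_iff_eq_C_of_isReduced (P := (u : MvPolynomial σ R))).mp u.isUnit
  exact ⟨hc.unit, by rw [hu, smul_eq_C_mul, mul_comm]; rfl⟩

theorem exists_monoidHom_apply_eq_smul {k R G : Type*} [Field k] [Ring R] [Algebra k R] [Monoid G]
    (φ : G →* (R ≃ₐ[k] R)) {b : R} (hb : b ≠ 0)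
    (h : ∀ g, ∃ c : kˣ, φ g b = (c : k) • b) :
    ∃ χ : G →* kˣ, ∀ g, φ g b = (χ g : k) • b := by
  choose c hc using h
  have hc_unique {c₁ c₂ : kˣ} (he : (c₁ : k) • b = (c₂ : k) • b) : c₁ = c₂ :=
    Units.ext (smul_left_injective k hb he)
  refine ⟨{ toFun := c, map_one' := hc_unique ?_, map_mul' := fun g h => hc_unique ?_ }, hc⟩
  · rw [← hc, map_one, AlgEquiv.one_apply, Units.val_one, one_smul]
  · rw [← hc, map_mul, AlgEquiv.mul_apply, hc, map_smul, hc, smul_smul, Units.val_mul, mul_comm]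

theorem stmt_9_general {k : Type*} [Field k] {V : Type*} {G : Type*} [Group G]
    (φ : G →* (MvPolynomial V k ≃ₐ[k] MvPolynomial V k))
    (ψ : G →* (FractionRing (MvPolynomial V k) ≃ₐ[k] FractionRing (MvPolynomial V k)))
    (hcompat : ∀ (g : G) (p : MvPolynomial V k),
      ψ g (algebraMap (MvPolynomial V k) (FractionRing (MvPolynomial V k)) p) =
        algebraMap (MvPolynomial V k) (FractionRing (MvPolynomial V k)) (φ g p))
    (hchar : ∀ lam : G →* kˣ, lam = 1) :
    ∀ x : FractionRing (MvPolynomial V k),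
      (∀ g : G, ψ g x = x) ↔
        ∃ f₁ f₂ : MvPolynomial V k, (∀ g : G, φ g f₁ = f₁) ∧ (∀ g : G, φ g f₂ = f₂) ∧
          f₂ ≠ 0 ∧
          x = algebraMap (MvPolynomial V k) (FractionRing (MvPolynomial V k)) f₁ /
              algebraMap (MvPolynomial V k) (FractionRing (MvPolynomial V k)) f₂ := by
  intro x
  refine ⟨fun hx => ?_, ?_⟩
  · set b : MvPolynomial V k := (den (MvPolynomial V k) x : MvPolynomial V k)
    have hb : b ≠ 0 := nonZeroDivisors.ne_zero (den (MvPolynomial V k) x).2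
    obtain ⟨χ, hχ⟩ := exists_monoidHom_apply_eq_smul φ hb fun g =>
      exists_smul_eq_of_associated <|
        associated_map_den (φ g).toRingEquiv (ψ g).toRingEquiv (hcompat g) (hx g)
    have hb_fixed (g : G) : φ g b = b := by simpa [hchar χ] using hχ g
    have ha_fixed (g : G) : φ g (num (MvPolynomial V k) x) = num (MvPolynomial V k) x := by
      apply IsFractionRing.injective (MvPolynomial V k) (FractionRing (MvPolynomial V k))
      rw [← hcompat, ← num_mul_den_eq_num_iff_eq.mpr rfl, map_mul, hx, hcompat, hb_fixed]
    exact ⟨_, b, ha_fixed, hb_fixed, hb, (mk'_num_den' (MvPolynomial V k) x).symm⟩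
  · rintro ⟨f₁, f₂, h₁, h₂, -, rfl⟩ g
    rw [map_div₀, hcompat, hcompat, h₁, h₂]

theorem stmt_9 {k : Type*} [Field k] {V : Type*} {G : Type*} [Group G]
    (φ : G →* (MvPolynomial V k ≃ₐ[k] MvPolynomial V k))
    (hdeg : ∀ (g : G) (p : MvPolynomial V k), (φ g p).totalDegree = p.totalDegree)
    (ψ : G →* (FractionRing (MvPolynomial V k) ≃ₐ[k] FractionRing (MvPolynomial V k)))
    (hcompat : ∀ (g : G) (p : MvPolynomial V k),
      ψ g (algebraMap (MvPolynomial V k) (FractionRing (MvPolynomial V k)) p) =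
        algebraMap (MvPolynomial V k) (FractionRing (MvPolynomial V k)) (φ g p))
    (hchar : ∀ lam : G →* kˣ, lam = 1) :
    ∀ x : FractionRing (MvPolynomial V k),
      (∀ g : G, ψ g x = x) ↔
        ∃ f₁ f₂ : MvPolynomial V k, (∀ g : G, φ g f₁ = f₁) ∧ (∀ g : G, φ g f₂ = f₂) ∧
          f₂ ≠ 0 ∧
          x = algebraMap (MvPolynomial V k) (FractionRing (MvPolynomial V k)) f₁ /
              algebraMap (MvPolynomial V k) (FractionRing (MvPolynomial V k)) f₂ :=
  stmt_9_general φ ψ hcompat hchar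
end

section
/- Let n ≥ 3 and let A₁,…,Aₙ and A'₁,…,A'ₙ be trace-zero 2×2 matrices over ℂ with Tr(AᵢAⱼ) = Tr(A'ᵢA'ⱼ) for all 1 ≤ i ≤ j ≤ n. Then either Tr(AᵢAⱼA_k) = Tr(A'ᵢA'ⱼA'_k) for all i < j < k, or Tr(AᵢAⱼA_k) = -Tr(A'ᵢA'ⱼA'_k) for all i < j < k. -/
/-!
For traceless `2 × 2` matrices, `2 · Tr(ABC) · Tr(DEF)` is minus the determinant of the `3 × 3`
matrix of pairwise traces `Tr(XY)`. Hence equal pairwise traces force equal products `f x * f y`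
of the triple traces `f (i, j, k) = Tr(AᵢAⱼA_k)`, and a function is determined up to one global
sign by the pairwise products of its values.
-/

open Matrix

theorem Matrix.two_mul_trace_triple_mul_trace_triple {R : Type*} [CommRing R]
    {A B C D E F : Matrix (Fin 2) (Fin 2) R} (hA : A.trace = 0) (hB : B.trace = 0)
    (hC : C.trace = 0) (hD : D.trace = 0) (hE : E.trace = 0) (hF : F.trace = 0) :
    2 * ((A * B * C).trace * (D * E * F).trace) =
      -!![(A * D).trace, (A * E).trace, (A * F).trace;
          (B * D).trace, (B * E).trace, (B * F).trace;
          (C * D).trace, (C * E).trace, (C * F).trace].det := by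
  have diag : ∀ {M : Matrix (Fin 2) (Fin 2) R}, M.trace = 0 → M 1 1 = -M 0 0 := fun hM => by
    rw [trace_fin_two] at hM
    linear_combination hM
  simp only [det_fin_three, of_apply, cons_val', cons_val_zero, cons_val_fin_one, cons_val_one,
    cons_val, trace_fin_two, mul_apply, Fin.sum_univ_two]
  rw [diag hA, diag hB, diag hC, diag hD, diag hE, diag hF]
  ring

theorem Matrix.trace_triple_mul_trace_triple_eq_of_trace_mul_eq {ι R : Type*} [CommRing R]
    [IsDomain R] [NeZero (2 : R)] {A A' : ι → Matrix (Fin 2) (Fin 2) R}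
    (hA : ∀ i, (A i).trace = 0) (hA' : ∀ i, (A' i).trace = 0)
    (htr : ∀ i j, (A i * A j).trace = (A' i * A' j).trace) (i j k p q r : ι) :
    (A i * A j * A k).trace * (A p * A q * A r).trace =
      (A' i * A' j * A' k).trace * (A' p * A' q * A' r).trace := by
  refine mul_left_cancel₀ (two_ne_zero (α := R)) ?_
  rw [two_mul_trace_triple_mul_trace_triple (hA i) (hA j) (hA k) (hA p) (hA q) (hA r),
    two_mul_trace_triple_mul_trace_triple (hA' i) (hA' j) (hA' k) (hA' p) (hA' q) (hA' r)]
  simp only [htr]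

theorem eq_or_eq_neg_of_forall_mul_eq {ι K : Type*} [CommRing K] [IsDomain K] {f g : ι → K}
    (h : ∀ x y, f x * f y = g x * g y) : f = g ∨ f = -g := by
  by_cases hfg : f = g
  · exact Or.inl hfg
  obtain ⟨x, hx⟩ := Function.ne_iff.mp hfg
  have hx_neg : f x = -g x := by
    have : (f x - g x) * (f x + g x) = 0 := by linear_combination h x x
    exact eq_neg_of_add_eq_zero_left
      ((mul_eq_zero.mp this).resolve_left (sub_ne_zero.mpr hx))
  have hx0 : f x ≠ 0 := fun h0 => hx (by linear_combination 2 * h0 - hx_neg)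
  refine Or.inr (funext fun y => mul_left_cancel₀ hx0 ?_)
  rw [Pi.neg_apply]
  linear_combination h x y + g y * hx_neg

theorem stmt_17_general (n : ℕ) (A A' : Fin n → Matrix (Fin 2) (Fin 2) ℂ)
    (hA : ∀ i, (A i).trace = 0) (hA' : ∀ i, (A' i).trace = 0)
    (htr : ∀ i j : Fin n, i ≤ j → (A i * A j).trace = (A' i * A' j).trace) :
    (∀ i j k : Fin n, i < j → j < k →
        (A i * A j * A k).trace = (A' i * A' j * A' k).trace) ∨
    (∀ i j k : Fin n, i < j → j < k →
        (A i * A j * A k).trace = -(A' i * A' j * A' k).trace) := by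
  have htr_all : ∀ i j, (A i * A j).trace = (A' i * A' j).trace := fun i j => by
    rcases le_total i j with h | h
    · exact htr i j h
    · rw [trace_mul_comm, trace_mul_comm (A' i), htr j i h]
  have hprod := trace_triple_mul_trace_triple_eq_of_trace_mul_eq hA hA' htr_all
  rcases eq_or_eq_neg_of_forall_mul_eq (f := fun x : Fin n × Fin n × Fin n =>
      (A x.1 * A x.2.1 * A x.2.2).trace) (g := fun x => (A' x.1 * A' x.2.1 * A' x.2.2).trace)
      (fun x y => hprod ..) with h | h
  · exact Or.inl fun i j k _ _ => congrFun h (i, j, k)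
  · exact Or.inr fun i j k _ _ => congrFun h (i, j, k)

theorem stmt_17 (n : ℕ) (hn : 3 ≤ n) (A A' : Fin n → Matrix (Fin 2) (Fin 2) ℂ)
    (hA : ∀ i, (A i).trace = 0) (hA' : ∀ i, (A' i).trace = 0)
    (htr : ∀ i j : Fin n, i ≤ j → (A i * A j).trace = (A' i * A' j).trace) :
    (∀ i j k : Fin n, i < j → j < k →
        (A i * A j * A k).trace = (A' i * A' j * A' k).trace) ∨
    (∀ i j k : Fin n, i < j → j < k →
        (A i * A j * A k).trace = -(A' i * A' j * A' k).trace) :=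
  stmt_17_general n A A' hA hA' htr
end
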